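/- Let x₁, …, x_r > 0 and α₁, …, α_r ∈ ℝ, and let P = M(x_r,α_r)·E⁻¹ · M(x_{r-1},α_{r-1})·E⁻¹ ⋯ M(x_1,α_1)·E⁻¹, with M and E as above. Then P is upper triangular with diagonal entries (x₁⋯x_r, e^{i(α₁+⋯+α_r)}, 1/(x₁⋯x_r)). In particular the spectral radius of P equals max(x₁⋯x_r, 1/(x₁⋯x_r)). -/

import Mathlib

open Complex

noncomputable def Mmat (x α : ℝ) : Matrix (Fin 3) (Fin 3) ℂ :=
  !![0, 0, (x : ℂ); 0, Complex.exp (α * I), 0; ((x : ℂ))⁻¹, 0, 0]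

noncomputable def Emat : Matrix (Fin 3) (Fin 3) ℂ :=
  !![-1, (Real.sqrt 2 : ℝ), 1; -(Real.sqrt 2 : ℝ), 1, 0; 1, 0, 0]

noncomputable def specRad (A : Matrix (Fin 3) (Fin 3) ℂ) : ℝ :=
  sSup {s : ℝ | ∃ μ : ℂ, (Matrix.charpoly A).IsRoot μ ∧ s = ‖μ‖}

/-!
Each factor `M(x, α) E⁻¹` is upper triangular with diagonal `(x, e^{iα}, 1/x)`. Upper triangular
matrices form a subsemiring on which the diagonal entries multiply, so `P` is upper triangular
with diagonal `(∏ x, e^{i ∑ α}, 1/∏ x)`. These are the roots of its characteristic polynomial,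
of moduli `∏ x`, `1` and `1/∏ x`, and `1 ≤ max(p, 1/p)` for `p > 0`.
-/

namespace Matrix

variable {n R : Type*} [Fintype n] [LinearOrder n]

theorem IsUpperTriangular.mul_apply_self [NonUnitalNonAssocSemiring R] {A B : Matrix n n R}
    (hA : A.IsUpperTriangular) (hB : B.IsUpperTriangular) (i : n) :
    (A * B) i i = A i i * B i i := by
  rw [mul_apply, Finset.sum_eq_single i]
  · intro k _ hki
    rcases hki.lt_or_gt with hlt | hgt
    · rw [hA hlt, zero_mul]
    · rw [hB hgt, mul_zero]
  · exact fun hi => absurd (Finset.mem_univ i) hi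

variable [DecidableEq n]

theorem isUpperTriangular_list_prod [Semiring R] {L : List (Matrix n n R)}
    (hL : ∀ A ∈ L, A.IsUpperTriangular) : L.prod.IsUpperTriangular :=
  show L.prod ∈ blockTriangularSubsemiring R id from Subsemiring.list_prod_mem _ hL

theorem list_prod_apply_self_of_isUpperTriangular [Semiring R] {L : List (Matrix n n R)}
    (hL : ∀ A ∈ L, A.IsUpperTriangular) (i : n) : L.prod i i = (L.map (· i i)).prod := by
  induction L with
  | nil => simp
  | cons A L ih =>
    rw [List.forall_mem_cons] at hL
    rw [List.prod_cons, hL.1.mul_apply_self (isUpperTriangular_list_prod hL.2), ih hL.2,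
      List.map_cons, List.prod_cons]

theorem ofFn_prod_apply_self_of_isUpperTriangular [CommSemiring R] {r : ℕ}
    {A : Fin r → Matrix n n R} (hA : ∀ j, (A j).IsUpperTriangular) (i : n) :
    (List.ofFn A).prod i i = ∏ j, A j i i := by
  rw [list_prod_apply_self_of_isUpperTriangular (List.forall_mem_ofFn_iff.2 hA),
    List.map_ofFn, List.prod_ofFn]
  rfl

theorem IsUpperTriangular.isRoot_charpoly_iff [CommRing R] [IsDomain R] {A : Matrix n n R}
    (hA : A.IsUpperTriangular) {μ : R} : A.charpoly.IsRoot μ ↔ ∃ i, A i i = μ := by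
  simp only [charpoly_of_isUpperTriangular A hA, Polynomial.IsRoot.def, Polynomial.eval_prod,
    Finset.prod_eq_zero_iff, Finset.mem_univ, true_and, Polynomial.eval_sub, Polynomial.eval_X,
    Polynomial.eval_C, sub_eq_zero]
  exact exists_congr fun i => eq_comm

end Matrix

theorem one_le_max_self_inv {p : ℝ} (hp : 0 < p) : 1 ≤ max p p⁻¹ := by
  rcases le_total 1 p with h | h
  · exact le_max_of_le_left h
  · exact le_max_of_le_right ((one_le_inv₀ hp).2 h)

theorem specRad_of_isUpperTriangular {A : Matrix (Fin 3) (Fin 3) ℂ} (hA : A.IsUpperTriangular) :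
    specRad A = max ‖A 0 0‖ (max ‖A 1 1‖ ‖A 2 2‖) := by
  have hnorms : {s : ℝ | ∃ μ : ℂ, A.charpoly.IsRoot μ ∧ s = ‖μ‖} =
      {‖A 0 0‖, ‖A 1 1‖, ‖A 2 2‖} := by
    ext s
    simp_rw [Set.mem_ofPred_eq, hA.isRoot_charpoly_iff]
    simp [Fin.exists_fin_succ]
  rw [specRad, hnorms, csSup_insert (Set.toFinite _).bddAbove (Set.insert_nonempty _ _),
    csSup_pair]

theorem Emat_inv : Emat⁻¹ = !![0, 0, 1; 0, 1, (√2 : ℂ); 1, -(√2 : ℂ), -1] := by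
  refine Matrix.inv_eq_right_inv ?_
  have hsqrt : (√2 : ℂ) * √2 = 2 := by norm_cast; simp
  rw [Emat, Matrix.mul_fin_three, Matrix.one_fin_three]
  norm_num [hsqrt]

theorem Mmat_mul_Emat_inv (x α : ℝ) : Mmat x α * Emat⁻¹ =
    !![(x : ℂ), -√2 * x, -x; 0, exp (α * I), √2 * exp (α * I); 0, 0, (x : ℂ)⁻¹] := by
  rw [Emat_inv, Mmat, Matrix.mul_fin_three]
  simp [mul_comm]

theorem isUpperTriangular_Mmat_mul_Emat_inv (x α : ℝ) :
    (Mmat x α * Emat⁻¹).IsUpperTriangular := by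
  rw [Mmat_mul_Emat_inv]
  intro i j hij
  fin_cases i <;> fin_cases j <;> first | rfl | exact absurd hij (by decide)

theorem product_upper_triangular (r : ℕ) (x α : Fin r → ℝ) (hx : ∀ j, 0 < x j) :
    let P : Matrix (Fin 3) (Fin 3) ℂ :=
      (List.ofFn fun j : Fin r => Mmat (x j.rev) (α j.rev) * Emat⁻¹).prod
    (∀ i j : Fin 3, j < i → P i j = 0) ∧
    P 0 0 = ∏ j, (x j : ℂ) ∧
    P 1 1 = Complex.exp ((∑ j, α j : ℝ) * I) ∧
    P 2 2 = (∏ j, (x j : ℂ))⁻¹ ∧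
    specRad P = max (∏ j, x j) (∏ j, x j)⁻¹ := by
  intro P
  have hfactors (j : Fin r) := isUpperTriangular_Mmat_mul_Emat_inv (x j.rev) (α j.rev)
  have hP : P.IsUpperTriangular :=
    Matrix.isUpperTriangular_list_prod (List.forall_mem_ofFn_iff.2 hfactors)
  have hdiag (i : Fin 3) : P i i = ∏ j, (Mmat (x j) (α j) * Emat⁻¹) i i :=
    (Matrix.ofFn_prod_apply_self_of_isUpperTriangular hfactors i).trans
      (Equiv.prod_comp Fin.revPerm fun j => (Mmat (x j) (α j) * Emat⁻¹) i i)
  have h00 : P 0 0 = ∏ j, (x j : ℂ) := by simp [hdiag, Mmat_mul_Emat_inv]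
  have h11 : P 1 1 = exp ((∑ j, α j : ℝ) * I) := by
    simp [hdiag, Mmat_mul_Emat_inv, ← exp_sum, Finset.sum_mul]
  have h22 : P 2 2 = (∏ j, (x j : ℂ))⁻¹ := by simp [hdiag, Mmat_mul_Emat_inv]
  refine ⟨fun i j hij => hP hij, h00, h11, h22, ?_⟩
  have hprod : 0 < ∏ j, x j := Finset.prod_pos fun j _ => hx j
  rw [specRad_of_isUpperTriangular hP, h00, h11, h22, norm_exp_ofReal_mul_I, ← ofReal_prod,
    norm_inv, norm_real, Real.norm_of_nonneg hprod.le, max_left_comm,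
    max_eq_right (one_le_max_self_inv hprod)]
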